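/- arXiv:1106.5351 — 4 statements merged into one kernel-verified Lean document; each statement's English description precedes it below -/
import Mathlib

section
/- Let λ_1, ..., λ_K be pairwise distinct nonzero complex numbers and u_0, u_1, ..., u_K vectors in ℂ^d with each u_ℓ ≠ 0 for ℓ ≥ 1. The function u(t) = u_0 + Σ_{ℓ=1}^K e^{λ_ℓ t} u_ℓ is periodic (i.e., there exists T > 0 with u(t+T) = u(t) for all t) if and only if every λ_ℓ is purely imaginary and nonzero, and λ_j / λ_k ∈ ℚ for all j, k. -/
/-!
The functions `t ↦ exp (λ t)` for distinct `λ` are distinct characters of `(ℝ, +)`, hence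
linearly independent, so `u` has period `T` exactly when `exp (λ_ℓ T) = 1` for every `ℓ`, i.e.
when every `λ_ℓ T` lies in `2πiℤ`. Such a `T > 0` forces each `λ_ℓ` onto the imaginary axis with
rational ratios; conversely, writing `λ_ℓ = q_ℓ λ_{ℓ₀}`, a period of `exp (λ_{ℓ₀} t)` multiplied
by a common denominator of the `q_ℓ` is a common period.
-/

open Complex
open scoped Real

noncomputable def expMulOfRealHom (a : ℂ) : Multiplicative ℝ →* ℂ where
  toFun t := exp (a * t.toAdd)
  map_one' := by simp
  map_mul' s t := by simp [mul_add, exp_add]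

theorem exp_mul_ofReal_injective : Function.Injective fun (a : ℂ) (t : ℝ) => exp (a * t) := by
  intro a b hab
  have hasDeriv (c : ℂ) : HasDerivAt (fun t : ℝ => exp (c * t)) c 0 := by
    simpa using (((hasDerivAt_id (0 : ℝ)).ofReal_comp).const_mul c).cexp
  exact (hasDeriv a).unique (by simpa only [hab] using hasDeriv b)

theorem linearIndependent_exp_mul_ofReal {ι : Type*} {Λ : ι → ℂ} (hΛ : Function.Injective Λ) :
    LinearIndependent ℂ fun ℓ (t : ℝ) => exp (Λ ℓ * t) :=
  (linearIndependent_monoidHom (Multiplicative ℝ) ℂ).comp (fun ℓ => expMulOfRealHom (Λ ℓ))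
    fun _ _ h => hΛ <| exp_mul_ofReal_injective <| funext fun t =>
      DFunLike.congr_fun h (Multiplicative.ofAdd t)

theorem eq_zero_of_forall_sum_exp_mul_ofReal_smul_eq_zero {ι E : Type*} [Fintype ι]
    [AddCommGroup E] [Module ℂ E] {Λ : ι → ℂ} (hΛ : Function.Injective Λ) {v : ι → E}
    (h : ∀ t : ℝ, ∑ ℓ, exp (Λ ℓ * t) • v ℓ = 0) (ℓ : ι) : v ℓ = 0 := by
  refine (Module.forall_dual_apply_eq_zero_iff ℂ (v ℓ)).1 fun φ => ?_
  refine Fintype.linearIndependent_iff.1 (linearIndependent_exp_mul_ofReal hΛ) (φ ∘ v) ?_ ℓ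
  funext t
  simpa [Finset.sum_apply, mul_comm] using congrArg φ (h t)

theorem sum_exp_mul_ofReal_smul_periodic_iff {ι E : Type*} [Fintype ι]
    [AddCommGroup E] [Module ℂ E] {Λ : ι → ℂ} (hΛ : Function.Injective Λ) {v : ι → E}
    (hv : ∀ ℓ, v ℓ ≠ 0) (T : ℝ) :
    (∀ t : ℝ, ∑ ℓ, exp (Λ ℓ * (t + T)) • v ℓ = ∑ ℓ, exp (Λ ℓ * t) • v ℓ) ↔
      ∀ ℓ, exp (Λ ℓ * T) = 1 := by
  have shift (t : ℝ) : ∑ ℓ, exp (Λ ℓ * (t + T)) • v ℓ - ∑ ℓ, exp (Λ ℓ * t) • v ℓ =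
      ∑ ℓ, exp (Λ ℓ * t) • ((exp (Λ ℓ * T) - 1) • v ℓ) := by
    rw [← Finset.sum_sub_distrib]
    refine Finset.sum_congr rfl fun ℓ _ => ?_
    rw [mul_add, exp_add]
    module
  constructor
  · intro hper ℓ
    have := eq_zero_of_forall_sum_exp_mul_ofReal_smul_eq_zero hΛ
      (fun t => by rw [← shift, hper, sub_self]) ℓ
    exact sub_eq_zero.1 ((smul_eq_zero.1 this).resolve_right (hv ℓ))
  · intro hexp t
    simp only [mul_add, exp_add, hexp, mul_one]

theorem re_eq_zero_of_exp_mul_ofReal_eq_one {a : ℂ} {T : ℝ} (hT : T ≠ 0)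
    (h : exp (a * T) = 1) : a.re = 0 := by
  have := congrArg norm h
  rw [norm_exp, norm_one, Real.exp_eq_one_iff, re_mul_ofReal] at this
  exact (mul_eq_zero.1 this).resolve_right hT

theorem exists_rat_div_eq_of_exp_mul_ofReal_eq_one {a b : ℂ} {T : ℝ} (hT : T ≠ 0) (hb : b ≠ 0)
    (ha : exp (a * T) = 1) (hb' : exp (b * T) = 1) : ∃ q : ℚ, a / b = q := by
  obtain ⟨m, hm⟩ := exp_eq_one_iff.1 ha
  obtain ⟨n, hn⟩ := exp_eq_one_iff.1 hb'
  have hT' : (T : ℂ) ≠ 0 := ofReal_ne_zero.2 hT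
  have hn0 : (n : ℂ) ≠ 0 := by
    rintro h0
    rw [h0, zero_mul] at hn
    exact mul_ne_zero hb hT' hn
  refine ⟨m / n, ?_⟩
  rw [← mul_div_mul_right a b hT', hm, hn]
  push_cast
  field_simp

theorem exists_pos_exp_mul_ofReal_eq_one {a : ℂ} (hre : a.re = 0) (ha : a ≠ 0) :
    ∃ T : ℝ, 0 < T ∧ exp (a * T) = 1 := by
  obtain ⟨θ, rfl⟩ : ∃ θ : ℝ, a = θ * I := ⟨a.im, Complex.ext (by simp [hre]) (by simp)⟩
  have hθ : (θ : ℂ) ≠ 0 := left_ne_zero_of_mul ha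
  refine ⟨2 * π / |θ|, div_pos Real.two_pi_pos (abs_pos.2 (ofReal_ne_zero.1 hθ)), ?_⟩
  rcases abs_choice θ with habs | habs <;> rw [habs] <;> push_cast
  · rw [show θ * I * (2 * π / θ) = 2 * π * I by field_simp, exp_two_pi_mul_I]
  · rw [show θ * I * (2 * π / -θ) = -(2 * π * I) by field_simp, exp_neg, exp_two_pi_mul_I, inv_one]

theorem Rat.exists_int_mul_eq_of_den_dvd {q : ℚ} {b : ℕ} (h : q.den ∣ b) :
    ∃ m : ℤ, q * b = m := by
  obtain ⟨c, rfl⟩ := h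
  exact ⟨q.num * c, by push_cast; rw [← mul_assoc, Rat.mul_den_eq_num]⟩

theorem exists_pos_forall_exp_mul_ofReal_eq_one {ι : Type*} [Fintype ι] {Λ : ι → ℂ}
    (hre : ∀ ℓ, (Λ ℓ).re = 0) (hne : ∀ ℓ, Λ ℓ ≠ 0) (hrat : ∀ j k, ∃ q : ℚ, Λ j / Λ k = q) :
    ∃ T : ℝ, 0 < T ∧ ∀ ℓ, exp (Λ ℓ * T) = 1 := by
  cases isEmpty_or_nonempty ι with
  | inl _ => exact ⟨1, one_pos, isEmptyElim⟩
  | inr h =>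
    obtain ⟨ℓ₀⟩ := h
    obtain ⟨T₀, hT₀, hexp₀⟩ := exists_pos_exp_mul_ofReal_eq_one (hre ℓ₀) (hne ℓ₀)
    choose q hq using fun ℓ => hrat ℓ ℓ₀
    set b := ∏ ℓ, (q ℓ).den
    refine ⟨b * T₀, mul_pos (Nat.cast_pos.2 (Finset.prod_pos fun ℓ _ => (q ℓ).pos)) hT₀,
      fun ℓ => ?_⟩
    obtain ⟨m, hm⟩ := Rat.exists_int_mul_eq_of_den_dvd
      (Finset.dvd_prod_of_mem (fun ℓ => (q ℓ).den) (Finset.mem_univ ℓ))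
    have hΛ : Λ ℓ * ↑(b * T₀ : ℝ) = m * (Λ ℓ₀ * T₀) := by
      rw [(div_eq_iff (hne ℓ₀)).1 (hq ℓ), ← Rat.cast_intCast, ← hm]
      push_cast [b]
      ring
    rw [hΛ, exp_int_mul, hexp₀, one_zpow]

/-- `u(t) = u₀ + ∑ e^{λ_ℓ t} u_ℓ` (with pairwise distinct nonzero `λ_ℓ` and nonzero `u_ℓ`)
is periodic iff every `λ_ℓ` is purely imaginary nonzero and all ratios `λ_j/λ_k` are rational. -/
theorem stmt1 (d K : ℕ) (u₀ : Fin d → ℂ) (u : Fin K → (Fin d → ℂ)) (hu : ∀ ℓ, u ℓ ≠ 0)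
    (Λ : Fin K → ℂ) (hΛne : ∀ ℓ, Λ ℓ ≠ 0) (hΛinj : Function.Injective Λ) :
    (∃ T : ℝ, 0 < T ∧ ∀ t : ℝ,
        (u₀ + ∑ ℓ, Complex.exp (Λ ℓ * (t + T)) • u ℓ)
          = u₀ + ∑ ℓ, Complex.exp (Λ ℓ * t) • u ℓ)
      ↔ ((∀ ℓ, (Λ ℓ).re = 0 ∧ Λ ℓ ≠ 0) ∧
          ∀ j k, ∃ q : ℚ, Λ j / Λ k = (q : ℂ)) := by
  constructor
  · rintro ⟨T, hT, hper⟩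
    have hexp : ∀ ℓ, exp (Λ ℓ * T) = 1 :=
      (sum_exp_mul_ofReal_smul_periodic_iff hΛinj hu T).1 fun t => add_left_cancel (hper t)
    exact ⟨fun ℓ => ⟨re_eq_zero_of_exp_mul_ofReal_eq_one hT.ne' (hexp ℓ), hΛne ℓ⟩,
      fun j k => exists_rat_div_eq_of_exp_mul_ofReal_eq_one hT.ne' (hΛne k) (hexp j) (hexp k)⟩
  · rintro ⟨hre, hrat⟩
    obtain ⟨T, hT, hexp⟩ := exists_pos_forall_exp_mul_ofReal_eq_one (fun ℓ => (hre ℓ).1) hΛne hrat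
    exact ⟨T, hT, fun t =>
      congrArg (u₀ + ·) ((sum_exp_mul_ofReal_smul_periodic_iff hΛinj hu T).2 hexp t)⟩
end

section
/- Let γ_{-N}, ..., γ_N ∈ ℂ satisfy Σ_k γ_k = 0 and Σ_k k γ_k = 1. Then for every fixed λ ∈ ℂ, the quantity −Σ_{k,ℓ} (γ_{k+ℓ} γ_ℓ / ε²) e^{kλε}, where the sum runs over −2N ≤ k ≤ 2N, −N ≤ ℓ ≤ N, |k+ℓ| ≤ N, tends to λ² as ε → 0. -/
/-!
Writing `g_λ(ε) = ∑ⱼ γⱼ e^{jλε}`, the substitution `j = k + ℓ` factors the double sum as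
`g_λ(ε) g_{-λ}(ε) / ε²`. Since `∑ γⱼ = 0` we have `g_λ(0) = 0`, and `∑ j γⱼ = 1` gives
`g_λ'(0) = λ`, so `g_λ(ε)/ε → λ` and `g_{-λ}(ε)/ε → -λ`.
-/

open Finset Filter Topology

theorem sum_Icc_filter_abs_add_le_eq {M : Type*} [AddCommMonoid M] (N : ℕ) (F : ℤ → ℤ → M) :
    ∑ k ∈ Icc (-(2 * N : ℤ)) (2 * N), ∑ ℓ ∈ (Icc (-(N : ℤ)) N).filter (fun ℓ => |k + ℓ| ≤ N),
        F k ℓ =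
      ∑ j ∈ Icc (-(N : ℤ)) N, ∑ ℓ ∈ Icc (-(N : ℤ)) N, F (j - ℓ) ℓ := by
  rw [sum_sigma', sum_sigma']
  refine sum_nbij' (fun p => ⟨p.1 + p.2, p.2⟩) (fun p => ⟨p.1 - p.2, p.2⟩) ?_ ?_ ?_ ?_ ?_
  · rintro ⟨k, ℓ⟩ hp
    simp only [mem_sigma, mem_filter, mem_Icc, abs_le] at hp ⊢
    omega
  · rintro ⟨j, ℓ⟩ hp
    simp only [mem_sigma, mem_filter, mem_Icc, abs_le] at hp ⊢
    omega
  all_goals simp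

/-- The symbol `∑ⱼ γⱼ e^{jλε}` of the difference operator `x ↦ ∑ⱼ γⱼ x(· + jε)`. -/
noncomputable def stencilSymbol (N : ℕ) (γ : ℤ → ℂ) (lam : ℂ) (ε : ℝ) : ℂ :=
  ∑ j ∈ Icc (-(N : ℤ)) N, γ j * Complex.exp (j * lam * ε)

theorem stencilSymbol_zero (N : ℕ) (γ : ℤ → ℂ) (lam : ℂ) :
    stencilSymbol N γ lam 0 = ∑ j ∈ Icc (-(N : ℤ)) N, γ j := by
  simp [stencilSymbol]

theorem hasDerivAt_stencilSymbol_zero (N : ℕ) (γ : ℤ → ℂ) (lam : ℂ) :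
    HasDerivAt (stencilSymbol N γ lam) ((∑ j ∈ Icc (-(N : ℤ)) N, (j : ℂ) * γ j) * lam) 0 := by
  have hsum : HasDerivAt (stencilSymbol N γ lam)
      (∑ j ∈ Icc (-(N : ℤ)) N, γ j * (Complex.exp (j * lam * ((0 : ℝ) : ℂ)) * (j * lam * 1))) 0 :=
    HasDerivAt.fun_sum fun j _ =>
      ((Complex.ofRealCLM.hasDerivAt.const_mul ((j : ℂ) * lam)).cexp).const_mul (γ j)
  convert hsum using 1
  simp only [Complex.ofReal_zero, mul_zero, Complex.exp_zero, one_mul, mul_one, sum_mul]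
  exact sum_congr rfl fun j _ => by ring

theorem tendsto_stencilSymbol_div (N : ℕ) (γ : ℤ → ℂ) (lam : ℂ)
    (h0 : ∑ j ∈ Icc (-(N : ℤ)) N, γ j = 0) :
    Tendsto (fun ε : ℝ => stencilSymbol N γ lam ε / ε) (𝓝[≠] 0)
      (𝓝 ((∑ j ∈ Icc (-(N : ℤ)) N, (j : ℂ) * γ j) * lam)) :=
  (hasDerivAt_stencilSymbol_zero N γ lam).tendsto_slope_zero.congr fun ε => by
    simp [stencilSymbol_zero, h0, Complex.real_smul, div_eq_inv_mul]

theorem sum_Icc_filter_eq_stencilSymbol_mul (N : ℕ) (γ : ℤ → ℂ) (lam : ℂ) (ε : ℝ) :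
    ∑ k ∈ Icc (-(2 * N : ℤ)) (2 * N), ∑ ℓ ∈ (Icc (-(N : ℤ)) N).filter (fun ℓ => |k + ℓ| ≤ N),
        (γ (k + ℓ) * γ ℓ / (ε : ℂ) ^ 2) * Complex.exp (k * lam * ε) =
      stencilSymbol N γ lam ε * stencilSymbol N γ (-lam) ε / (ε : ℂ) ^ 2 := by
  rw [sum_Icc_filter_abs_add_le_eq, stencilSymbol, stencilSymbol, sum_mul_sum, sum_div]
  refine sum_congr rfl fun j _ => ?_
  rw [sum_div]
  refine sum_congr rfl fun ℓ _ => ?_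
  rw [sub_add_cancel, mul_mul_mul_comm, ← Complex.exp_add]
  push_cast
  ring_nf

/-- The symbol `−∑ (γ_{k+ℓ} γ_ℓ / ε²) e^{kλε}` of `−Box_{-ε} Box_ε` tends to `λ²`
as `ε → 0`. -/
theorem stmt9 (N : ℕ) (γ : ℤ → ℂ)
    (h0 : ∑ k ∈ Finset.Icc (-(N : ℤ)) N, γ k = 0)
    (h1 : ∑ k ∈ Finset.Icc (-(N : ℤ)) N, (k : ℂ) * γ k = 1)
    (lam : ℂ) :
    Filter.Tendsto
      (fun ε : ℝ =>
        -∑ k ∈ Finset.Icc (-(2 * N : ℤ)) (2 * N),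
          ∑ ℓ ∈ (Finset.Icc (-(N : ℤ)) N).filter (fun ℓ => |k + ℓ| ≤ (N : ℤ)),
            (γ (k + ℓ) * γ ℓ / (ε : ℂ) ^ 2) * Complex.exp (k * lam * ε))
      (nhdsWithin 0 {0}ᶜ) (nhds (lam ^ 2)) := by
  have hprod := ((tendsto_stencilSymbol_div N γ lam h0).mul
    (tendsto_stencilSymbol_div N γ (-lam) h0)).neg
  rw [h1, one_mul, one_mul, mul_neg, neg_neg, ← sq] at hprod
  refine hprod.congr fun ε => ?_
  rw [sum_Icc_filter_eq_stencilSymbol_mul, div_mul_div_comm, ← sq]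
end

section
/- Let P(X) = a_0 X^m + ... + a_m ∈ ℂ[X] be nonzero with roots ξ_1, ..., ξ_r of multiplicities μ_1, ..., μ_r. Let ε_0 > 0 be such that the closed disks B_j centered at ξ_j with radius ε_0 are pairwise disjoint and contained in the open disk of radius 1/ε_0 about 0. Then there exists δ > 0 such that for any b_0, ..., b_m ∈ ℂ with |b_j − a_j| < δ for all j and Q(X) = b_0 X^m + ... + b_m nonzero, the polynomial Q has exactly μ_j roots (with multiplicity) in each B_j, and deg(Q) − deg(P) roots of absolute value greater than 1/ε_0. -/
/-!
Put `t = 1 / (8 (m + 1))` and `η = t² ε₀ / 4`. Off the `η`-disks around the `ξ j`, `|P|` is bounded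
below on the closed disk of radius `1 / ε₀`, so a small perturbation of the coefficients gives
`|Q - P| ≤ t |P|` there. Hence `Q` has no roots there either, and every root of `P` or `Q` is either
within `η` of `ξ j` or farther than `ε₀` from it.

The number `ν` of roots of such a polynomial `S` within `η` of `ξ = ξ j` is read off from the test
points `ξ + h` and `ξ + 2h`, `|h| = t ε₀ / 2`: a near root contributes a factor `≈ 2` to
`|S(ξ + 2h)| / |S(ξ + h)|` and a far root a factor `≈ 1`, so
`log |S(ξ + 2h)| - log |S(ξ + h)| = ν log 2 + O(t deg S)`. As `|Q|` and `|P|` agree up to a factor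
`1 ± t` at both points, `ν_Q` and `ν_P` differ by less than `1`. The roots of `Q` outside the big
disk are the `deg Q - deg P` that remain.
-/

open Polynomial Metric Real

theorem Multiset.abs_sum_map_sub_card_filter_mul_le {α : Type*} (s : Multiset α) (g : α → ℝ)
    (p : α → Prop) [DecidablePred p] {c τ : ℝ} (h : ∀ z ∈ s, |g z - if p z then c else 0| ≤ τ) :
    |(s.map g).sum - card (s.filter p) * c| ≤ card s * τ := by
  induction s using Multiset.induction with
  | empty => simp
  | cons a s ih =>
    have hsplit : g a + (s.map g).sum - ((if p a then 1 else 0 : ℕ) + card (s.filter p) : ℕ) * c =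
        (g a - if p a then c else 0) + ((s.map g).sum - card (s.filter p) * c) := by
      split_ifs <;> push_cast <;> ring
    rw [map_cons, sum_cons, filter_cons, card_add, apply_ite card, card_singleton, card_zero,
      hsplit, card_cons, Nat.cast_succ, add_one_mul, add_comm _ τ]
    exact (abs_add_le _ _).trans (add_le_add (h a (mem_cons_self a s))
      (ih fun z hz => h z (mem_cons_of_mem hz)))

theorem Multiset.card_filter_exists_eq_sum {α ι : Type*} [Fintype ι] (s : Multiset α)
    (p : ι → α → Prop) [∀ i, DecidablePred (p i)] [DecidablePred fun z => ∃ i, p i z]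
    (huniq : ∀ z ∈ s, ∀ i j, p i z → p j z → i = j) :
    card (s.filter fun z => ∃ i, p i z) = ∑ i, card (s.filter (p i)) := by
  induction s using Multiset.induction with
  | empty => simp
  | cons a s ih =>
    rw [Finset.sum_congr rfl fun i _ => by rw [filter_cons, card_add], Finset.sum_add_distrib,
      ← ih fun z hz => huniq z (mem_cons_of_mem hz), filter_cons, card_add]
    congr 1
    by_cases ha : ∃ i, p i a
    · obtain ⟨i₀, hi₀⟩ := ha
      rw [if_pos ⟨i₀, hi₀⟩, Finset.sum_eq_single i₀ (fun i _ hi => ?_) (by simp)]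
      · simp [hi₀]
      · rw [if_neg fun hpi => hi (huniq a (mem_cons_self a s) i i₀ hpi hi₀), card_zero]
    · simp only [not_exists] at ha
      simp [ha]

theorem abs_log_norm_sub_log_norm_le {E : Type*} [SeminormedAddCommGroup E] {a b : E} {t : ℝ}
    (ht₀ : 0 ≤ t) (ht : t ≤ 1 / 2) (hab : ‖a - b‖ ≤ t * ‖b‖) :
    |log ‖a‖ - log ‖b‖| ≤ 2 * t := by
  have hdiff : |‖a‖ - ‖b‖| ≤ t * ‖b‖ := (abs_norm_sub_norm_le a b).trans hab
  rw [abs_le] at hdiff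
  rcases (norm_nonneg b).eq_or_lt with hb | hb
  · rw [← hb, mul_zero] at hdiff
    have ha : ‖a‖ = 0 := by linarith [norm_nonneg a]
    simp [ha, ← hb, ht₀]
  have ha : ‖b‖ / 2 ≤ ‖a‖ := by nlinarith
  have ha₀ : 0 < ‖a‖ := by linarith
  rw [abs_le]
  constructor
  · have h := log_le_sub_one_of_pos (div_pos hb ha₀)
    rw [log_div hb.ne' ha₀.ne'] at h
    have : ‖b‖ / ‖a‖ - 1 ≤ 2 * t := by
      rw [div_sub_one ha₀.ne', div_le_iff₀ ha₀]
      nlinarith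
    linarith
  · have h := log_le_sub_one_of_pos (div_pos ha₀ hb)
    rw [log_div ha₀.ne' hb.ne'] at h
    have : ‖a‖ / ‖b‖ - 1 ≤ t := by
      rw [div_sub_one hb.ne', div_le_iff₀ hb]
      linarith
    linarith

theorem ne_zero_of_norm_sub_le_mul {E : Type*} [NormedAddCommGroup E] {a b : E} {t : ℝ}
    (hb : b ≠ 0) (hab : ‖a - b‖ ≤ t * ‖b‖) (ht : t < 1) : a ≠ 0 := by
  rintro rfl
  rw [zero_sub, norm_neg] at hab
  nlinarith [norm_pos_iff.mpr hb]

theorem abs_log_norm_sub_log_norm_sub_log_two_le {ξ h z : ℂ} {t : ℝ} (ht₀ : 0 ≤ t)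
    (ht : t ≤ 1 / 2) (hh : h ≠ 0) (hz : ‖z - ξ‖ ≤ t * ‖h‖ / 2) :
    |log ‖ξ + 2 * h - z‖ - log ‖ξ + h - z‖ - log 2| ≤ 2 * t := by
  have hlow : 3 / 2 * ‖h‖ ≤ ‖2 * (ξ + h - z)‖ := by
    have := norm_sub_norm_le h (z - ξ)
    rw [norm_mul, Complex.norm_two, show ξ + h - z = h - (z - ξ) by ring]
    nlinarith [norm_nonneg h]
  have hne : ξ + h - z ≠ 0 := by
    intro h0
    rw [h0, mul_zero, norm_zero] at hlow
    linarith [norm_pos_iff.mpr hh]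
  have key := abs_log_norm_sub_log_norm_le (a := ξ + 2 * h - z) (b := 2 * (ξ + h - z)) ht₀ ht
    (by
      rw [show ξ + 2 * h - z - 2 * (ξ + h - z) = z - ξ by ring]
      nlinarith [norm_nonneg h])
  rwa [norm_mul, Complex.norm_two, log_mul two_ne_zero (norm_ne_zero_iff.mpr hne),
    ← sub_sub, sub_right_comm] at key

theorem abs_log_norm_sub_log_norm_le_of_norm_le_mul {ξ h z : ℂ} {t : ℝ} (ht₀ : 0 ≤ t)
    (ht : t ≤ 1 / 2) (hz : ‖h‖ ≤ t * ‖ξ + h - z‖) :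
    |log ‖ξ + 2 * h - z‖ - log ‖ξ + h - z‖| ≤ 2 * t :=
  abs_log_norm_sub_log_norm_le ht₀ ht (by rwa [show ξ + 2 * h - z - (ξ + h - z) = h by ring])

theorem log_norm_eval_eq {K : Type*} [NormedField K] {S : K[X]} (hS : S.Splits) {x : K}
    (hx : S.eval x ≠ 0) :
    log ‖S.eval x‖ = log ‖S.leadingCoeff‖ + (S.roots.map fun z => log ‖x - z‖).sum := by
  rw [hS.eval_eq_prod_roots] at hx ⊢
  have hlc : S.leadingCoeff ≠ 0 := left_ne_zero_of_mul hx
  have hprod := right_ne_zero_of_mul hx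
  rw [norm_mul, log_mul (norm_ne_zero_iff.mpr hlc) (norm_ne_zero_iff.mpr hprod)]
  have hnorm : ‖(S.roots.map (x - ·)).prod‖ = (S.roots.map fun z => ‖x - z‖).prod := by
    simpa [Multiset.map_map] using map_multiset_prod (normHom : K →*₀ ℝ) (S.roots.map (x - ·))
  rw [hnorm, log_multiset_prod, Multiset.map_map]
  · rfl
  · simp only [Multiset.mem_map]
    rintro _ ⟨z, hz, rfl⟩
    exact norm_ne_zero_iff.mpr fun h0 =>
      hprod (Multiset.prod_eq_zero (Multiset.mem_map.mpr ⟨z, hz, h0⟩))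

theorem abs_log_norm_eval_sub_log_norm_eval_sub_le {S : ℂ[X]} {ξ h : ℂ} {ε t : ℝ} (hε : 0 < ε)
    (ht₀ : 0 < t) (ht : t ≤ 1 / 2) (hh : ‖h‖ = t * ε / 2)
    (hroots : ∀ z ∈ S.roots, ‖z - ξ‖ ≤ t ^ 2 * ε / 4 ∨ ε < ‖z - ξ‖)
    (h₁ : S.eval (ξ + 2 * h) ≠ 0) (h₂ : S.eval (ξ + h) ≠ 0) :
    |log ‖S.eval (ξ + 2 * h)‖ - log ‖S.eval (ξ + h)‖ -
        (S.roots.filter (‖· - ξ‖ ≤ t ^ 2 * ε / 4)).card * log 2| ≤ S.natDegree * (2 * t) := by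
  rw [log_norm_eval_eq (IsAlgClosed.splits S) h₁, log_norm_eval_eq (IsAlgClosed.splits S) h₂,
    add_sub_add_left_eq_sub, ← Multiset.sum_map_sub, ← IsAlgClosed.card_roots_eq_natDegree]
  refine Multiset.abs_sum_map_sub_card_filter_mul_le _ _ _ fun z hz => ?_
  have hh₀ : h ≠ 0 := norm_pos_iff.mp (by rw [hh]; positivity)
  split_ifs with hnear
  · exact abs_log_norm_sub_log_norm_sub_log_two_le ht₀.le ht hh₀
      (hnear.trans_eq (by rw [hh]; ring))
  · rw [sub_zero]
    refine abs_log_norm_sub_log_norm_le_of_norm_le_mul ht₀.le ht ?_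
    have hfar := (hroots z hz).resolve_left hnear
    have := norm_sub_norm_le (z - ξ) h
    rw [show ξ + h - z = -(z - ξ - h) by ring, norm_neg, hh]
    rw [hh] at this
    nlinarith [mul_le_mul_of_nonneg_left this ht₀.le, mul_lt_mul_of_pos_left hfar ht₀,
      mul_pos ht₀ hε]

theorem card_roots_filter_norm_sub_le_eq {P Q : ℂ[X]} {ξ : ℂ} {ε t : ℝ} (hε : 0 < ε) (ht₀ : 0 < t)
    (ht : t * (P.natDegree + Q.natDegree + 2) ≤ 1 / 4)
    (hP : ∀ z ∈ P.roots, ‖z - ξ‖ ≤ t ^ 2 * ε / 4 ∨ ε < ‖z - ξ‖)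
    (hQ : ∀ z ∈ Q.roots, ‖z - ξ‖ ≤ t ^ 2 * ε / 4 ∨ ε < ‖z - ξ‖)
    (hPQ : ∀ x, t ^ 2 * ε / 4 ≤ ‖x - ξ‖ → ‖x - ξ‖ ≤ ε →
      P.eval x ≠ 0 ∧ ‖Q.eval x - P.eval x‖ ≤ t * ‖P.eval x‖) :
    (Q.roots.filter (‖· - ξ‖ ≤ t ^ 2 * ε / 4)).card =
      (P.roots.filter (‖· - ξ‖ ≤ t ^ 2 * ε / 4)).card := by
  have ht : t ≤ 1 / 8 := by nlinarith [(P.natDegree + Q.natDegree : ℕ).cast_nonneg (α := ℝ)]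
  have htε : t ^ 2 * ε ≤ t * ε / 8 := by nlinarith [mul_pos ht₀ hε]
  set h : ℂ := ((t * ε / 2 : ℝ) : ℂ)
  have hh : ‖h‖ = t * ε / 2 := by rw [Complex.norm_real, Real.norm_of_nonneg (by positivity)]
  have hx₁ : ‖ξ + 2 * h - ξ‖ = t * ε := by
    rw [add_sub_cancel_left, norm_mul, Complex.norm_two, hh]; ring
  have hx₂ : ‖ξ + h - ξ‖ = t * ε / 2 := by rw [add_sub_cancel_left, hh]
  obtain ⟨hP₁, hPQ₁⟩ := hPQ (ξ + 2 * h) (by rw [hx₁]; nlinarith) (by rw [hx₁]; nlinarith)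
  obtain ⟨hP₂, hPQ₂⟩ := hPQ (ξ + h) (by rw [hx₂]; nlinarith) (by rw [hx₂]; nlinarith)
  have hQ₁ := ne_zero_of_norm_sub_le_mul hP₁ hPQ₁ (by linarith)
  have hQ₂ := ne_zero_of_norm_sub_le_mul hP₂ hPQ₂ (by linarith)
  have hPlog := abs_log_norm_eval_sub_log_norm_eval_sub_le hε ht₀ (by linarith) hh hP hP₁ hP₂
  have hQlog := abs_log_norm_eval_sub_log_norm_eval_sub_le hε ht₀ (by linarith) hh hQ hQ₁ hQ₂
  have hlog₁ := abs_log_norm_sub_log_norm_le ht₀.le (by linarith) hPQ₁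
  have hlog₂ := abs_log_norm_sub_log_norm_le ht₀.le (by linarith) hPQ₂
  set νP := (P.roots.filter (‖· - ξ‖ ≤ t ^ 2 * ε / 4)).card
  set νQ := (Q.roots.filter (‖· - ξ‖ ≤ t ^ 2 * ε / 4)).card
  have hlog2 := Real.log_two_gt_d9
  rw [abs_le] at hPlog hQlog hlog₁ hlog₂
  -- `|νQ - νP| log 2 ≤ 2 t (deg P + deg Q + 2) ≤ 1 / 2 < log 2`
  have h₁ : (νQ : ℝ) < νP + 1 := by nlinarith
  have h₂ : (νP : ℝ) < νQ + 1 := by nlinarith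
  have h₁' : νQ < νP + 1 := by exact_mod_cast h₁
  have h₂' : νP < νQ + 1 := by exact_mod_cast h₂
  omega

section Centers

variable {E ι : Type*} [SeminormedAddCommGroup E] {ξ : ι → E} {ε η R : ℝ}

theorem eq_of_norm_sub_le_of_norm_sub_le
    (hdisj : ∀ j k, j ≠ k → Disjoint (closedBall (ξ j) ε) (closedBall (ξ k) ε)) {z : E} {j k : ι}
    (hj : ‖z - ξ j‖ ≤ ε) (hk : ‖z - ξ k‖ ≤ ε) : j = k := by
  by_contra hjk
  exact Set.disjoint_left.mp (hdisj j k hjk) (mem_closedBall_iff_norm.mpr hj)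
    (mem_closedBall_iff_norm.mpr hk)

theorem norm_sub_le_or_lt_norm_sub
    (hdisj : ∀ j k, j ≠ k → Disjoint (closedBall (ξ j) ε) (closedBall (ξ k) ε))
    (hin : ∀ j, closedBall (ξ j) ε ⊆ ball 0 R) (hη : η ≤ ε) {z : E}
    (hz : ‖z‖ ≤ R → ∃ k, ‖z - ξ k‖ ≤ η) (j : ι) : ‖z - ξ j‖ ≤ η ∨ ε < ‖z - ξ j‖ := by
  refine (le_or_gt _ _).imp_left fun hj => ?_
  obtain ⟨k, hk⟩ := hz (mem_ball_zero_iff.mp (hin j (mem_closedBall_iff_norm.mpr hj))).le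
  rwa [eq_of_norm_sub_le_of_norm_sub_le hdisj hj (hk.trans hη)]

theorem mem_closedBall_diff_iUnion_ball
    (hdisj : ∀ j k, j ≠ k → Disjoint (closedBall (ξ j) ε) (closedBall (ξ k) ε))
    (hin : ∀ j, closedBall (ξ j) ε ⊆ ball 0 R) (hη : η ≤ ε) {x : E} {j : ι}
    (hx₁ : η ≤ ‖x - ξ j‖) (hx₂ : ‖x - ξ j‖ ≤ ε) : x ∈ closedBall 0 R \ ⋃ k, ball (ξ k) η := by
  refine ⟨ball_subset_closedBall (hin j (mem_closedBall_iff_norm.mpr hx₂)), fun hx => ?_⟩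
  obtain ⟨k, hk⟩ := Set.mem_iUnion.mp hx
  rw [mem_ball_iff_norm] at hk
  rw [eq_of_norm_sub_le_of_norm_sub_le hdisj hx₂ (hk.le.trans hη)] at hx₁
  exact hx₁.not_gt hk

theorem card_filter_norm_le_eq_sum [Fintype ι]
    (hdisj : ∀ j k, j ≠ k → Disjoint (closedBall (ξ j) ε) (closedBall (ξ k) ε))
    (hin : ∀ j, closedBall (ξ j) ε ⊆ ball 0 R) (hη : η ≤ ε) {s : Multiset E}
    (hs : ∀ z ∈ s, ‖z‖ ≤ R → ∃ k, ‖z - ξ k‖ ≤ η) :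
    (s.filter (‖·‖ ≤ R)).card = ∑ j, (s.filter (‖· - ξ j‖ ≤ η)).card := by
  classical
  rw [← Multiset.card_filter_exists_eq_sum s _ fun z _ j k hj hk =>
    eq_of_norm_sub_le_of_norm_sub_le hdisj (hj.trans hη) (hk.trans hη)]
  congr 1
  refine Multiset.filter_congr fun z hz => ⟨hs z hz, fun ⟨j, hj⟩ => ?_⟩
  exact (mem_ball_zero_iff.mp (hin j (mem_closedBall_iff_norm.mpr (hj.trans hη)))).le

theorem filter_norm_sub_le_eq_filter
    (hdisj : ∀ j k, j ≠ k → Disjoint (closedBall (ξ j) ε) (closedBall (ξ k) ε))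
    (hin : ∀ j, closedBall (ξ j) ε ⊆ ball 0 R) (hη : η ≤ ε) {s : Multiset E}
    (hs : ∀ z ∈ s, ‖z‖ ≤ R → ∃ k, ‖z - ξ k‖ ≤ η) (j : ι) :
    s.filter (‖· - ξ j‖ ≤ ε) = s.filter (‖· - ξ j‖ ≤ η) :=
  Multiset.filter_congr fun z hz =>
    ⟨fun h => (norm_sub_le_or_lt_norm_sub hdisj hin hη (hs z hz) j).resolve_right h.not_gt,
      fun h => h.trans hη⟩

theorem card_filter_norm_sub_le_eq_count [DecidableEq E]
    (hdisj : ∀ j k, j ≠ k → Disjoint (closedBall (ξ j) ε) (closedBall (ξ k) ε))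
    (hη₀ : 0 ≤ η) (hη : η ≤ ε) {s : Multiset E} (hs : ∀ z ∈ s, ∃ k, z = ξ k) (j : ι) :
    (s.filter (‖· - ξ j‖ ≤ η)).card = s.count (ξ j) := by
  rw [Multiset.filter_congr (q := (· = ξ j)) fun z hz => ?_, Multiset.filter_eq',
    Multiset.card_replicate]
  obtain ⟨k, rfl⟩ := hs z hz
  refine ⟨fun h => congrArg ξ (eq_of_norm_sub_le_of_norm_sub_le hdisj ?_ (h.trans hη)),
    fun h => by simp [h, hη₀]⟩
  simpa using hη₀.trans hη

theorem card_filter_lt_norm_eq_sub [Fintype ι]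
    (hdisj : ∀ j k, j ≠ k → Disjoint (closedBall (ξ j) ε) (closedBall (ξ k) ε))
    (hin : ∀ j, closedBall (ξ j) ε ⊆ ball 0 R) (hη₀ : 0 ≤ η) (hη : η ≤ ε) {s s' : Multiset E}
    (hs : ∀ z ∈ s, ∃ k, z = ξ k) (hs' : ∀ z ∈ s', ‖z‖ ≤ R → ∃ k, ‖z - ξ k‖ ≤ η)
    (hcount : ∀ j, (s'.filter (‖· - ξ j‖ ≤ η)).card = (s.filter (‖· - ξ j‖ ≤ η)).card) :
    (s'.filter (R < ‖·‖)).card = s'.card - s.card := by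
  have hsplit := congrArg Multiset.card (s'.filter_add_not (R < ‖·‖))
  simp only [not_lt, Multiset.card_add] at hsplit
  have hsum := card_filter_norm_le_eq_sum hdisj hin hη (s := s) fun z hz _ => by
    obtain ⟨k, rfl⟩ := hs z hz
    exact ⟨k, by simpa using hη₀⟩
  rw [Multiset.filter_eq_self.mpr fun z hz => ?_] at hsum
  · rw [card_filter_norm_le_eq_sum hdisj hin hη hs'] at hsplit
    simp only [hcount] at hsplit
    omega
  obtain ⟨k, rfl⟩ := hs z hz
  exact (mem_ball_zero_iff.mp (hin k (mem_closedBall_self (hη₀.trans hη)))).le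

end Centers

theorem exists_norm_sub_le_of_mem_roots {K : Type*} [NormedField K] {S : K[X]} {ι : Type*}
    {ξ : ι → K} {η R : ℝ} (hS : ∀ x ∈ closedBall 0 R \ ⋃ k, ball (ξ k) η, S.eval x ≠ 0)
    {z : K} (hz : z ∈ S.roots) (hzR : ‖z‖ ≤ R) : ∃ k, ‖z - ξ k‖ ≤ η := by
  by_contra! h
  refine hS z ⟨mem_closedBall_zero_iff.mpr hzR, fun hz' => ?_⟩ (isRoot_of_mem_roots hz)
  obtain ⟨k, hk⟩ := Set.mem_iUnion.mp hz'
  exact (h k).not_gt (mem_ball_iff_norm.mp hk)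

noncomputable def ofDescCoeffs {R : Type*} [Semiring R] (m : ℕ) (a : Fin (m + 1) → R) : R[X] :=
  ∑ i : Fin (m + 1), C (a i) * X ^ (m - (i : ℕ))

theorem natDegree_ofDescCoeffs_le {R : Type*} [Semiring R] (m : ℕ) (a : Fin (m + 1) → R) :
    (ofDescCoeffs m a).natDegree ≤ m :=
  natDegree_sum_le_of_forall_le _ _ fun _ _ => (natDegree_C_mul_X_pow_le _ _).trans (Nat.sub_le _ _)

theorem norm_eval_ofDescCoeffs_le {𝕜 : Type*} [NormedField 𝕜] {m : ℕ} {a : Fin (m + 1) → 𝕜}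
    {δ R : ℝ} {x : 𝕜} (ha : ∀ i, ‖a i‖ ≤ δ) (hR : 1 ≤ R) (hx : ‖x‖ ≤ R) :
    ‖(ofDescCoeffs m a).eval x‖ ≤ (m + 1) * δ * R ^ m := by
  rw [ofDescCoeffs, eval_finsetSum]
  calc _ ≤ ∑ _i : Fin (m + 1), δ * R ^ m := norm_sum_le_of_le _ fun i _ => ?_
    _ = _ := by simp; ring
  simp only [eval_mul, eval_C, eval_pow, eval_X, norm_mul, norm_pow]
  exact mul_le_mul (ha i) ((pow_le_pow_left₀ (norm_nonneg x) hx _).trans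
    (pow_le_pow_right₀ hR (Nat.sub_le _ _))) (by positivity) ((norm_nonneg _).trans (ha i))

theorem eval_ofDescCoeffs_sub {R : Type*} [CommRing R] {m : ℕ} (a b : Fin (m + 1) → R) (x : R) :
    (ofDescCoeffs m b).eval x - (ofDescCoeffs m a).eval x = (ofDescCoeffs m (b - a)).eval x := by
  simp only [ofDescCoeffs, eval_finsetSum, ← Finset.sum_sub_distrib, eval_mul, eval_C, Pi.sub_apply,
    sub_mul]

theorem exists_pos_forall_norm_eval_ofDescCoeffs_sub_le {m : ℕ} (a : Fin (m + 1) → ℂ)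
    {K : Set ℂ} (hK : IsCompact K) (ha : ∀ x ∈ K, (ofDescCoeffs m a).eval x ≠ 0) {t : ℝ}
    (ht : 0 < t) :
    ∃ δ > 0, ∀ b : Fin (m + 1) → ℂ, (∀ i, ‖b i - a i‖ < δ) → ∀ x ∈ K,
      ‖(ofDescCoeffs m b).eval x - (ofDescCoeffs m a).eval x‖ ≤
        t * ‖(ofDescCoeffs m a).eval x‖ := by
  obtain ⟨c, hc, hcP⟩ := hK.exists_forall_le' (ofDescCoeffs m a).continuous.norm.continuousOn
    fun x hx => norm_pos_iff.mpr (ha x hx)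
  obtain ⟨R, hR⟩ := hK.isBounded.subset_closedBall 0
  set R' := max 1 R
  have hR' : 0 < R' := one_pos.trans_le (le_max_left _ _)
  refine ⟨t * c / ((m + 1) * R' ^ m), by positivity, fun b hb x hx => ?_⟩
  rw [eval_ofDescCoeffs_sub]
  calc _ ≤ (m + 1) * (t * c / ((m + 1) * R' ^ m)) * R' ^ m :=
        norm_eval_ofDescCoeffs_le (fun i => (hb i).le) (le_max_left _ _)
          ((mem_closedBall_zero_iff.mp (hR hx)).trans (le_max_right _ _))
    _ = t * c := by field_simp
    _ ≤ _ := mul_le_mul_of_nonneg_left (hcP x hx) ht.le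

open Polynomial Metric in
theorem stmt11_general (m : ℕ) (a : Fin (m + 1) → ℂ)
    (P : Polynomial ℂ) (hP : P = ∑ i : Fin (m + 1), Polynomial.C (a i) * X ^ (m - (i : ℕ)))
    (r : ℕ) (ξ : Fin r → ℂ) (μ : Fin r → ℕ)
    (hmul : ∀ j, P.rootMultiplicity (ξ j) = μ j)
    (hall : ∀ z : ℂ, P.IsRoot z → ∃ j, z = ξ j)
    (ε₀ : ℝ) (hε₀ : 0 < ε₀)
    (hdisj : ∀ j k, j ≠ k → Disjoint (closedBall (ξ j) ε₀) (closedBall (ξ k) ε₀))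
    (hin : ∀ j, closedBall (ξ j) ε₀ ⊆ ball (0 : ℂ) (1 / ε₀)) :
    ∃ δ : ℝ, 0 < δ ∧ ∀ b : Fin (m + 1) → ℂ, (∀ i, ‖b i - a i‖ < δ) →
      ∀ Q : Polynomial ℂ,
        Q = ∑ i : Fin (m + 1), Polynomial.C (b i) * X ^ (m - (i : ℕ)) → Q ≠ 0 →
        (∀ j, (Q.roots.filter (fun z => ‖z - ξ j‖ ≤ ε₀)).card = μ j) ∧
        (Q.roots.filter (fun z => 1 / ε₀ < ‖z‖)).card
          = Q.natDegree - P.natDegree := by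
  classical
  set t : ℝ := 1 / (8 * (m + 1)) with ht_def
  have ht₀ : 0 < t := by positivity
  have htm : t * (m + m + 2) = 1 / 4 := by rw [ht_def]; field_simp; ring
  have ht : t < 1 := by nlinarith [(m : ℕ).cast_nonneg (α := ℝ)]
  set η := t ^ 2 * ε₀ / 4
  have hη₀ : 0 < η := by positivity
  have hηε : η ≤ ε₀ := show t ^ 2 * ε₀ / 4 ≤ ε₀ by nlinarith [pow_lt_one₀ ht₀.le ht two_ne_zero]
  set K := closedBall (0 : ℂ) (1 / ε₀) \ ⋃ k, ball (ξ k) η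
  have hProots : ∀ z ∈ P.roots, ∃ k, z = ξ k := fun z hz => hall z (isRoot_of_mem_roots hz)
  have hPK : ∀ x ∈ K, P.eval x ≠ 0 := fun x hx h0 => by
    obtain ⟨k, rfl⟩ := hall x h0
    exact hx.2 (Set.mem_iUnion.2 ⟨k, mem_ball_self hη₀⟩)
  obtain ⟨δ, hδ, hclose⟩ := exists_pos_forall_norm_eval_ofDescCoeffs_sub_le a
    ((isCompact_closedBall _ _).diff (isOpen_iUnion fun k => isOpen_ball)) (hP ▸ hPK) ht₀
  refine ⟨δ, hδ, fun b hb Q hQ _ => ?_⟩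
  have hQP : ∀ x ∈ K, ‖Q.eval x - P.eval x‖ ≤ t * ‖P.eval x‖ := hP ▸ hQ ▸ hclose b hb
  have hQK : ∀ x ∈ K, Q.eval x ≠ 0 := fun x hx =>
    ne_zero_of_norm_sub_le_mul (hPK x hx) (hQP x hx) ht
  have hloc : ∀ S : ℂ[X], (∀ x ∈ K, S.eval x ≠ 0) →
      ∀ z ∈ S.roots, ‖z‖ ≤ 1 / ε₀ → ∃ k, ‖z - ξ k‖ ≤ η := fun _ hS _ hz =>
    exists_norm_sub_le_of_mem_roots hS hz
  have hdeg : t * (P.natDegree + Q.natDegree + 2) ≤ 1 / 4 := by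
    rw [← htm, hP, hQ]
    gcongr <;> exact_mod_cast natDegree_ofDescCoeffs_le m _
  have hcount : ∀ j, (Q.roots.filter (‖· - ξ j‖ ≤ η)).card =
      (P.roots.filter (‖· - ξ j‖ ≤ η)).card := fun j =>
    card_roots_filter_norm_sub_le_eq hε₀ ht₀ hdeg
      (fun z hz => norm_sub_le_or_lt_norm_sub hdisj hin hηε (hloc P hPK z hz) j)
      (fun z hz => norm_sub_le_or_lt_norm_sub hdisj hin hηε (hloc Q hQK z hz) j) fun x hx₁ hx₂ =>
        have hxK := mem_closedBall_diff_iUnion_ball hdisj hin hηε hx₁ hx₂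
        ⟨hPK x hxK, hQP x hxK⟩
  refine ⟨fun j => ?_, ?_⟩
  · rw [filter_norm_sub_le_eq_filter hdisj hin hηε (hloc Q hQK) j, hcount,
      card_filter_norm_sub_le_eq_count hdisj hη₀.le hηε hProots, count_roots, hmul]
  · rw [card_filter_lt_norm_eq_sub hdisj hin hη₀.le hηε hProots (hloc Q hQK) hcount,
      IsAlgClosed.card_roots_eq_natDegree, IsAlgClosed.card_roots_eq_natDegree]

open Polynomial Metric in
/-- Cucker–Corbalán: roots of a polynomial depend continuously on its coefficients, with
degree allowed to drop; the `deg Q − deg P` extra roots escape to infinity. -/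
theorem stmt11 (m : ℕ) (a : Fin (m + 1) → ℂ)
    (P : Polynomial ℂ) (hP : P = ∑ i : Fin (m + 1), Polynomial.C (a i) * X ^ (m - (i : ℕ)))
    (hP0 : P ≠ 0) (r : ℕ) (ξ : Fin r → ℂ) (μ : Fin r → ℕ) (hξ : Function.Injective ξ)
    (hmul : ∀ j, P.rootMultiplicity (ξ j) = μ j)
    (hall : ∀ z : ℂ, P.IsRoot z → ∃ j, z = ξ j)
    (ε₀ : ℝ) (hε₀ : 0 < ε₀)
    (hdisj : ∀ j k, j ≠ k → Disjoint (closedBall (ξ j) ε₀) (closedBall (ξ k) ε₀))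
    (hin : ∀ j, closedBall (ξ j) ε₀ ⊆ ball (0 : ℂ) (1 / ε₀)) :
    ∃ δ : ℝ, 0 < δ ∧ ∀ b : Fin (m + 1) → ℂ, (∀ i, ‖b i - a i‖ < δ) →
      ∀ Q : Polynomial ℂ,
        Q = ∑ i : Fin (m + 1), Polynomial.C (b i) * X ^ (m - (i : ℕ)) → Q ≠ 0 →
        (∀ j, (Q.roots.filter (fun z => ‖z - ξ j‖ ≤ ε₀)).card = μ j) ∧
        (Q.roots.filter (fun z => 1 / ε₀ < ‖z‖)).card
          = Q.natDegree - P.natDegree :=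
  stmt11_general m a P hP r ξ μ hmul hall ε₀ hε₀ hdisj hin
end

section
/- Let P_ν(λ) = (J_1 + 2(ν−1)J_3)λ² − 2J_5 λ − (J_2 + 2(ν−1)J_4) with J_2 + 2(n−1)J_4 invertible, and suppose det(P_n(λ)) has 2d distinct roots, det(P_0(λ)) has 2d distinct roots, the two root sets are disjoint, and neither polynomial vanishes at 0. For each root α of det P_n, choose x_{s,α} ∈ ker P_n(α), set x_{s,0} = −n (J_2 + 2(n−1)J_4)^{-1} J_7, and define x_{j,α} = 2 P_0(α)^{-1}(J_4 − α² J_3) x_{s,α} and x_{j,0} = −(J_2 − 2J_4)^{-1}(2J_4 x_{s,0} + J_7). Then x_{j,0} = (1/n) x_{s,0} and x_{j,α} = (1/n) x_{s,α} for every root α of det P_n. -/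
/-!
Subtracting the two quadratic pencils gives `P_0(α) = P_n(α) + 2n (J_4 − α² J_3)`, so on
`ker P_n(α)` the matrix `2 (J_4 − α² J_3)` acts as `P_0(α) / n`, and inverting `P_0(α)` yields
`x_{j,α} = x_{s,α} / n`. Likewise `J_2 + 2(n−1) J_4 = (J_2 − 2 J_4) + 2n J_4`, so `x_{s,0} / n`
solves the linear system defining `x_{j,0}`.
-/

namespace Matrix

variable {ι R : Type*} [Fintype ι] [DecidableEq ι]

lemma inv_mulVec_eq_of_mulVec_eq [CommRing R] {A : Matrix ι ι R} (hA : IsUnit A)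
    {u v : ι → R} (h : A *ᵥ v = u) : A⁻¹ *ᵥ u = v := by
  have := hA.invertible
  exact inv_mulVec_eq_vec h.symm

lemma mulVec_inv_mulVec [CommRing R] {A : Matrix ι ι R} (hA : IsUnit A) (u : ι → R) :
    A *ᵥ (A⁻¹ *ᵥ u) = u := by
  rw [mulVec_mulVec, mul_nonsing_inv A ((isUnit_iff_isUnit_det A).mp hA), one_mulVec]

variable [Field R]

lemma inv_mulVec_mulVec_of_mulVec_eq_zero {A B K : Matrix ι ι R} {c : R} (hB : IsUnit B)
    (hc : c ≠ 0) (hBA : B = A + c • K) {x : ι → R} (hx : A *ᵥ x = 0) :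
    B⁻¹ *ᵥ (K *ᵥ x) = c⁻¹ • x := by
  refine inv_mulVec_eq_of_mulVec_eq hB ?_
  rw [hBA, add_mulVec, mulVec_smul, hx, smul_zero, zero_add, smul_mulVec, mulVec_smul, smul_smul,
    mul_inv_cancel₀ hc, one_smul]

lemma neg_inv_mulVec_eq_of_add_smul {M N J : Matrix ι ι R} {m : R} (hN : IsUnit N)
    (hm : m ≠ 0) (hMN : M = N + (2 * m) • J) {x b : ι → R} (hx : M *ᵥ x = -m • b) :
    -(N⁻¹ *ᵥ ((2 : R) • (J *ᵥ x) + b)) = m⁻¹ • x := by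
  rw [← mulVec_neg]
  refine inv_mulVec_eq_of_mulVec_eq hN ?_
  have hNx : N *ᵥ x = -m • b - (2 * m) • (J *ᵥ x) := by
    rw [← hx, hMN, add_mulVec, smul_mulVec, add_sub_cancel_right]
  rw [mulVec_smul, hNx, smul_sub, smul_smul, smul_smul, mul_neg, inv_mul_cancel₀ hm,
    mul_left_comm, inv_mul_cancel₀ hm, mul_one, neg_smul, one_smul]
  abel

end Matrix

open Matrix in
theorem stmt17_general (d n : ℕ) (hn : 1 ≤ n)
    (J₁ J₂ J₃ J₄ J₅ : Matrix (Fin d) (Fin d) ℝ)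
    (J₇ : Fin d → ℝ)
    (P : ℝ → ℂ → Matrix (Fin d) (Fin d) ℂ)
    (hP : ∀ (ν : ℝ) (lam : ℂ), P ν lam =
      lam ^ 2 • (J₁.map Complex.ofReal + ((2 * (ν - 1) : ℝ) : ℂ) • J₃.map Complex.ofReal)
        - (2 * lam) • J₅.map Complex.ofReal
        - (J₂.map Complex.ofReal + ((2 * (ν - 1) : ℝ) : ℂ) • J₄.map Complex.ofReal))
    (hinv : IsUnit (J₂ + (2 * ((n : ℝ) - 1)) • J₄))
    (hinv' : IsUnit (J₂ - 2 • J₄))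
    (Qn Q0 : Finset ℂ)
    (hQ0 : ∀ lam : ℂ, (P 0 lam).det = 0 ↔ lam ∈ Q0)
    (hdisj : Disjoint Qn Q0)
    (xs0 : Fin d → ℂ)
    (hxs0 : xs0 = -(n : ℂ) •
      (((J₂ + (2 * ((n : ℝ) - 1)) • J₄).map Complex.ofReal)⁻¹ *ᵥ (Complex.ofReal ∘ J₇))) :
    (-(((J₂ - 2 • J₄).map Complex.ofReal)⁻¹ *ᵥ
        ((2 : ℂ) • (J₄.map Complex.ofReal *ᵥ xs0) + Complex.ofReal ∘ J₇))
      = (1 / (n : ℂ)) • xs0)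
    ∧ ∀ α ∈ Qn, ∀ xsα : Fin d → ℂ, P (n : ℝ) α *ᵥ xsα = 0 →
        (2 : ℂ) • ((P 0 α)⁻¹ *ᵥ
            ((J₄.map Complex.ofReal - α ^ 2 • J₃.map Complex.ofReal) *ᵥ xsα))
          = (1 / (n : ℂ)) • xsα := by
  have hn0 : (n : ℂ) ≠ 0 := Nat.cast_ne_zero.mpr (by omega)
  have hunit {A : Matrix (Fin d) (Fin d) ℝ} (hA : IsUnit A) : IsUnit (A.map Complex.ofReal) :=
    hA.map Complex.ofRealHom.mapMatrix
  constructor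
  · have hsplit : (J₂ + (2 * ((n : ℝ) - 1)) • J₄).map Complex.ofReal
        = (J₂ - 2 • J₄).map Complex.ofReal + (2 * (n : ℂ)) • J₄.map Complex.ofReal := by
      ext i j
      simp only [map_apply, Matrix.add_apply, Matrix.sub_apply, Matrix.smul_apply]
      simp only [smul_eq_mul, nsmul_eq_mul]
      push_cast
      ring
    have hMxs0 : (J₂ + (2 * ((n : ℝ) - 1)) • J₄).map Complex.ofReal *ᵥ xs0
        = -(n : ℂ) • (Complex.ofReal ∘ J₇) := by
      rw [hxs0, mulVec_smul, mulVec_inv_mulVec (hunit hinv)]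
    rw [one_div, neg_inv_mulVec_eq_of_add_smul (hunit hinv') hn0 hsplit hMxs0]
  · intro α hα xsα hxsα
    have hP0 : IsUnit (P 0 α) := (isUnit_iff_isUnit_det _).mpr <| isUnit_iff_ne_zero.mpr
      fun h => Finset.disjoint_left.mp hdisj hα ((hQ0 α).mp h)
    have hsplit : P 0 α = P n α
        + (2 * (n : ℂ)) • (J₄.map Complex.ofReal - α ^ 2 • J₃.map Complex.ofReal) := by
      rw [hP, hP]
      ext i j
      simp
      ring
    rw [inv_mulVec_mulVec_of_mulVec_eq_zero hP0 (mul_ne_zero two_ne_zero hn0) hsplit hxsα,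
      smul_smul]
    congr 1
    field_simp

open Matrix in
/-- In the generic situation, the amplitudes of each particle are `1/n` times the amplitudes
of the center-of-mass sum: `x_{j,0} = (1/n) x_{s,0}` and `x_{j,α} = (1/n) x_{s,α}`. -/
theorem stmt17 (d n : ℕ) (hn : 1 ≤ n)
    (J₁ J₂ J₃ J₄ J₅ : Matrix (Fin d) (Fin d) ℝ)
    (hJ₁ : J₁.IsSymm) (hJ₂ : J₂.IsSymm) (hJ₃ : J₃.IsSymm) (hJ₄ : J₄.IsSymm)
    (hJ₅ : J₅ᵀ = -J₅) (J₇ : Fin d → ℝ)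
    (P : ℝ → ℂ → Matrix (Fin d) (Fin d) ℂ)
    (hP : ∀ (ν : ℝ) (lam : ℂ), P ν lam =
      lam ^ 2 • (J₁.map Complex.ofReal + ((2 * (ν - 1) : ℝ) : ℂ) • J₃.map Complex.ofReal)
        - (2 * lam) • J₅.map Complex.ofReal
        - (J₂.map Complex.ofReal + ((2 * (ν - 1) : ℝ) : ℂ) • J₄.map Complex.ofReal))
    (hinv : IsUnit (J₂ + (2 * ((n : ℝ) - 1)) • J₄))
    (hinv' : IsUnit (J₂ - 2 • J₄))
    (Qn Q0 : Finset ℂ)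
    (hQn : ∀ lam : ℂ, (P n lam).det = 0 ↔ lam ∈ Qn)
    (hQ0 : ∀ lam : ℂ, (P 0 lam).det = 0 ↔ lam ∈ Q0)
    (hcardn : Qn.card = 2 * d) (hcard0 : Q0.card = 2 * d)
    (hdisj : Disjoint Qn Q0)
    (h0n : (P n 0).det ≠ 0) (h00 : (P 0 0).det ≠ 0)
    (xs0 : Fin d → ℂ)
    (hxs0 : xs0 = -(n : ℂ) •
      (((J₂ + (2 * ((n : ℝ) - 1)) • J₄).map Complex.ofReal)⁻¹ *ᵥ (Complex.ofReal ∘ J₇))) :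
    (-(((J₂ - 2 • J₄).map Complex.ofReal)⁻¹ *ᵥ
        ((2 : ℂ) • (J₄.map Complex.ofReal *ᵥ xs0) + Complex.ofReal ∘ J₇))
      = (1 / (n : ℂ)) • xs0)
    ∧ ∀ α ∈ Qn, ∀ xsα : Fin d → ℂ, P (n : ℝ) α *ᵥ xsα = 0 →
        (2 : ℂ) • ((P 0 α)⁻¹ *ᵥ
            ((J₄.map Complex.ofReal - α ^ 2 • J₃.map Complex.ofReal) *ᵥ xsα))
          = (1 / (n : ℂ)) • xsα :=
  stmt17_general d n hn J₁ J₂ J₃ J₄ J₅ J₇ P hP hinv hinv' Qn Q0 hQ0 hdisj xs0 hxs0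
end
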